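/- If i, i′ ∈ Σ_{n+1} are 2-move equivalent, then the string cones C_i and C_{i′} are unimodularly equivalent; moreover, for every dominant integral weight λ, the string polytopes Δ_i(λ) and Δ_{i′}(λ) are unimodularly equivalent. -/

import Mathlib

/-!
A 2-move exchanges adjacent letters `a`, `b` with `|a - b| > 1` at positions `p`, `p + 1`. The
crossings `t_p` and `t_{p+1}` lie in non-adjacent columns and involve four distinct wires, so the
two wiring diagrams agree up to relabelling these two nodes by the transposition `τ = (p p+1)`:
the wires through each node and the order of the nodes along each wire are preserved. Hence `τ`
maps the rigorous paths of `G(i)` bijectively onto those of `G(i')`, and the string inequalities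
correspond under the coordinate permutation exchanging `t_p` and `t_{p+1}`. So do the
`λ`-inequalities: the triangular condition `k > j` changes only for the pair `{t_p, t_{p+1}}`, whose
`λ`-coefficient vanishes because their columns are not adjacent. A permutation matrix is
unimodular, and unimodular equivalence is transitive.
-/

open scoped Classical

noncomputable section

namespace StringPolytope

/-! ### Words, reduced words, two-moves -/

/-- the simple transposition `s_a = (a, a+1)` acting on `ℕ` (wires are `1, …, n+1`). -/
def sTrans (a : ℕ) : Equiv.Perm ℕ := Equiv.swap a (a + 1)

/-- product `s_{i₁} ⋯ s_{i_N}` of the simple transpositions of a word. -/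
def wordProd (w : List ℕ) : Equiv.Perm ℕ := (w.map sTrans).prod

/-- the longest element `w₀` of the symmetric group on `{1, …, n+1}`,
sending `k ↦ n + 2 - k` there and fixing everything else. -/
def longestPerm (n : ℕ) : Equiv.Perm ℕ :=
  Function.Involutive.toPerm
    (fun k => if 1 ≤ k ∧ k ≤ n + 1 then n + 2 - k else k)
    (by intro k; dsimp only; split_ifs <;> omega)

/-- `w ∈ Σ_{n+1}`: a reduced word of the longest element of `S_{n+1}`,
i.e. a word over `[n] = {1,…,n}` of length `N = n(n+1)/2` whose product is `w₀`. -/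
def IsReduced (n : ℕ) (w : List ℕ) : Prop :=
  w.length = n * (n + 1) / 2 ∧ (∀ a ∈ w, 1 ≤ a ∧ a ≤ n) ∧ wordProd w = longestPerm n

/-- a single 2-move: exchange two adjacent letters `(a, b)` with `|a - b| > 1`. -/
def TwoMoveStep (w w' : List ℕ) : Prop :=
  ∃ u v a b, (a + 1 < b ∨ b + 1 < a) ∧ w = u ++ a :: b :: v ∧ w' = u ++ b :: a :: v

/-- 2-move equivalence of words. -/
def TwoMoveEquiv : List ℕ → List ℕ → Prop := Relation.ReflTransGen TwoMoveStep

/-- `A_n = (1, 2, …, n)`. -/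
def ascWord (n : ℕ) : List ℕ := (List.range n).map (· + 1)

/-- `D_n = (n, n-1, …, 1)`. -/
def descWord (n : ℕ) : List ℕ := (ascWord n).reverse

/-! ### The wiring diagram -/

/-- the letter `i_j` of `w` (1-based index `j`); the node `t_j` lies in column `i_j`. -/
def letterAt (w : List ℕ) (j : ℕ) : ℕ := w.getD (j - 1) 0

/-- `1 ≤ j ≤ N`: `t_j` is an actual node of the diagram. -/
def ValidNode (w : List ℕ) (j : ℕ) : Prop := 1 ≤ j ∧ j ≤ w.length

/-- the column-to-wire assignment just above node `t_j`
(at the top of the diagram, wire `k` is in column `k`). -/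
def stateAbove (w : List ℕ) (j : ℕ) : Equiv.Perm ℕ := wordProd (w.take (j - 1))

/-- the column-to-wire assignment just below node `t_j`. -/
def stateBelow (w : List ℕ) (j : ℕ) : Equiv.Perm ℕ := wordProd (w.take j)

/-- one of the two wires crossing at node `t_j` (the one leaving upward-left). -/
def wireX (w : List ℕ) (j : ℕ) : ℕ := stateAbove w j (letterAt w j)

/-- the other wire crossing at node `t_j` (the one leaving upward-right). -/
def wireY (w : List ℕ) (j : ℕ) : ℕ := stateAbove w j (letterAt w j + 1)

/-- the node `t_j` lies on the wire `ℓ_r`. -/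
def NodeOnWire (w : List ℕ) (j r : ℕ) : Prop := wireX w j = r ∨ wireY w j = r

/-- given one wire `r` at node `t_j`, the other wire crossing there. -/
def otherWire (w : List ℕ) (j r : ℕ) : ℕ := if wireX w j = r then wireY w j else wireX w j

/-- the column of wire `ℓ_r` at the height of node `t_j`. -/
def wireCol (w : List ℕ) (j r : ℕ) : ℕ := (stateBelow w j).symm r

/-- node `t_j` lies strictly below the wire `ℓ_{n+1}`
(which runs from the bottom-left corner to the top-right corner). -/
def BelowWireLast (n : ℕ) (w : List ℕ) (j : ℕ) : Prop :=
  wireCol w j (n + 1) < letterAt w j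

/-- node `t_j` lies strictly above the wire `ℓ_{n+1}`. -/
def AboveWireLast (n : ℕ) (w : List ℕ) (j : ℕ) : Prop :=
  letterAt w j + 1 < wireCol w j (n + 1)

/-- node `t_j` lies strictly below the wire `ℓ_1`
(which runs from the bottom-right corner to the top-left corner). -/
def BelowWireOne (w : List ℕ) (j : ℕ) : Prop :=
  letterAt w j + 1 < wireCol w j 1

/-- node `t_j` lies strictly above the wire `ℓ_1`. -/
def AboveWireOne (w : List ℕ) (j : ℕ) : Prop :=
  wireCol w j 1 < letterAt w j

/-! ### Rigorous (Gleizer–Postnikov) paths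

A path in `G(i, k)` is encoded by `k` together with the list of its switching
nodes, in order of travel.  Wires `ℓ_1, …, ℓ_k` are oriented upward
(decreasing node index) and the remaining wires downward. -/

/-- the (1-based indices of the) nodes lying on wire `ℓ_r`, in order of increasing index. -/
def nodesOn (w : List ℕ) (r : ℕ) : List ℕ :=
  ((List.range w.length).map (· + 1)).filter (fun j => decide (NodeOnWire w j r))

/-- nodes on wire `ℓ_r` strictly between the nodes `t_a` and `t_b`. -/
def segList (w : List ℕ) (r a b : ℕ) : List ℕ :=
  (nodesOn w r).filter (fun j => decide (min a b < j ∧ j < max a b))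

/-- nodes on wire `ℓ_r` strictly below the node `t_a`. -/
def tailList (w : List ℕ) (r a : ℕ) : List ℕ :=
  (nodesOn w r).filter (fun j => decide (a < j))

/-- a forbidden fragment of `G(i, k)`: the path passes straight through node `t_j`
travelling along the wire `ℓ_r`, where the other wire `ℓ_b` crossing there has the same
orientation as `ℓ_r` and (`r < b` if both upward, `r > b` if both downward). -/
def Forbidden (w : List ℕ) (k j r : ℕ) : Prop :=
  (r ≤ k ∧ otherWire w j r ≤ k ∧ r < otherWire w j r) ∨
  (k < r ∧ k < otherWire w j r ∧ otherWire w j r < r)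

/-- travelling in `G(i,k)`: currently on wire `ℓ_r` at node `t_a` (just switched there),
with future switching nodes `ms`; the travel is legal and ends at `L_{k+1}`. -/
def TravelOK (w : List ℕ) (k : ℕ) : ℕ → ℕ → List ℕ → Prop
  | r, a, [] => r = k + 1 ∧ ∀ j ∈ tailList w r a, ¬ Forbidden w k j r
  | r, a, m :: ms =>
      ValidNode w m ∧ NodeOnWire w m r ∧
      (if r ≤ k then m < a else a < m) ∧
      (∀ j ∈ segList w r a m, ¬ Forbidden w k j r) ∧
      TravelOK w k (otherWire w m r) m ms

/-- all nodes visited after the switch at node `t_a` onto wire `ℓ_r`. -/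
def visitTail (w : List ℕ) : ℕ → ℕ → List ℕ → List ℕ
  | r, a, [] => tailList w r a
  | r, a, m :: ms => segList w r a m ++ m :: visitTail w (otherWire w m r) m ms

/-- the list of all nodes visited by the path (switching nodes and straight passes). -/
def visitList (w : List ℕ) (k : ℕ) : List ℕ → List ℕ
  | [] => []
  | m :: ms => tailList w k m ++ m :: visitTail w (otherWire w m k) m ms

/-- `(k, ms)` encodes a rigorous (Gleizer–Postnikov) path in `G(i, k)`:
it starts at `L_k` going up the wire `ℓ_k`, switches wires exactly at the nodes
listed in `ms`, respects the orientation, ends at `L_{k+1}`, contains no forbidden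
fragment and passes through each node at most once. -/
def IsGPPath (n : ℕ) (w : List ℕ) (k : ℕ) (ms : List ℕ) : Prop :=
  1 ≤ k ∧ k ≤ n ∧
  (match ms with
   | [] => False
   | m :: rest =>
       ValidNode w m ∧ NodeOnWire w m k ∧
       (∀ j ∈ tailList w k m, ¬ Forbidden w k j k) ∧
       TravelOK w k (otherWire w m k) m rest) ∧
  (visitList w k ms).Nodup

/-- the set `GP(i)` of all rigorous paths of `G(i)`. -/
def GP (n : ℕ) (w : List ℕ) : Set (ℕ × List ℕ) := {p | IsGPPath n w p.1 p.2}

/-- `|GP(i)|`, the number of rigorous paths. -/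
def numGP (n : ℕ) (w : List ℕ) : ℕ := (GP n w).ncard

/-- the successive switches of a path: `(node, from-wire, to-wire)`. -/
def pathSwitches (w : List ℕ) : ℕ → List ℕ → List (ℕ × ℕ × ℕ)
  | _, [] => []
  | r, m :: ms => (m, r, otherWire w m r) :: pathSwitches w (otherWire w m r) ms

/-- the wire-expression of a path: the successive wires travelled. -/
def wireSeq (w : List ℕ) : ℕ → List ℕ → List ℕ
  | r, [] => [r]
  | r, m :: ms => r :: wireSeq w (otherWire w m r) ms

/-- the peaks of a path: switching nodes where the path switches from an
upward wire to a downward wire. -/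
def peaks (w : List ℕ) (k : ℕ) (ms : List ℕ) : List ℕ :=
  ((pathSwitches w k ms).filter (fun e => decide (e.2.1 ≤ k ∧ k < e.2.2))).map (·.1)

/-! ### String cone, `λ`-cone, string polytope -/

/-- `N = n(n+1)/2`, the number of nodes. -/
abbrev Dim (n : ℕ) : ℕ := n * (n + 1) / 2

/-- the coefficient `a_j` of `t_j` in the string inequality of the path `(k, ms)`:
`+1` if the path switches at `t_j` from `ℓ_r` to `ℓ_s` with `r < s`,
`-1` if it switches with `r > s`, and `0` otherwise. -/
def coeff (w : List ℕ) (k : ℕ) (ms : List ℕ) (j : ℕ) : ℝ :=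
  ((pathSwitches w k ms).map (fun e =>
    if e.1 = j then (if e.2.1 < e.2.2 then (1 : ℝ) else -1) else 0)).sum

/-- the (primitive inward normal) coefficient vector of the string inequality of a path. -/
def normalVec (n : ℕ) (w : List ℕ) (p : ℕ × List ℕ) : Fin (Dim n) → ℝ :=
  fun j => coeff w p.1 p.2 ((j : ℕ) + 1)

/-- the left-hand side `∑ a_j t_j` of the string inequality of the path `p`. -/
def stringIneq (n : ℕ) (w : List ℕ) (p : ℕ × List ℕ) (t : Fin (Dim n) → ℝ) : ℝ :=
  ∑ j : Fin (Dim n), normalVec n w p j * t j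

/-- the string cone `C_i ⊆ ℝ^N`. -/
def stringCone (n : ℕ) (w : List ℕ) : Set (Fin (Dim n) → ℝ) :=
  {t | ∀ p ∈ GP n w, 0 ≤ stringIneq n w p t}

/-- the polyhedron cut out by all string inequalities except the one of `p₀`. -/
def stringConeExcept (n : ℕ) (w : List ℕ) (p₀ : ℕ × List ℕ) : Set (Fin (Dim n) → ℝ) :=
  {t | ∀ p ∈ GP n w, p ≠ p₀ → 0 ≤ stringIneq n w p t}

/-- the coefficient `a_k` in the `λ`-inequality of node `t_j`:
`1` if `t_k` is one column left or right of `t_j`, `-2` if in the same column. -/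
def lamCoeff (w : List ℕ) (j k : ℕ) : ℝ :=
  if letterAt w k = letterAt w j then -2
  else if letterAt w k = letterAt w j + 1 ∨ letterAt w k + 1 = letterAt w j then 1
  else 0

/-- the `λ`-inequality of node `t_{j+1}`:
`t_j ≤ λ_{i_j} + ∑_{k > j} a_k t_k`. -/
def LamIneq (n : ℕ) (w : List ℕ) (lam : ℕ → ℤ) (j : Fin (Dim n)) (t : Fin (Dim n) → ℝ) : Prop :=
  t j ≤ (lam (letterAt w ((j : ℕ) + 1)) : ℝ) +
    ∑ k : Fin (Dim n),
      (if (j : ℕ) < (k : ℕ) then lamCoeff w ((j : ℕ) + 1) ((k : ℕ) + 1) else 0) * t k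

/-- the `λ`-cone `C_i^λ ⊆ ℝ^N`. -/
def lamCone (n : ℕ) (w : List ℕ) (lam : ℕ → ℤ) : Set (Fin (Dim n) → ℝ) :=
  {t | ∀ j, LamIneq n w lam j t}

/-- the polyhedron cut out by all `λ`-inequalities except the one of `j₀`. -/
def lamConeExcept (n : ℕ) (w : List ℕ) (lam : ℕ → ℤ) (j₀ : Fin (Dim n)) :
    Set (Fin (Dim n) → ℝ) :=
  {t | ∀ j, j ≠ j₀ → LamIneq n w lam j t}

/-- the string polytope `Δ_i(λ) = C_i ∩ C_i^λ`. -/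
def stringPolytope (n : ℕ) (w : List ℕ) (lam : ℕ → ℤ) : Set (Fin (Dim n) → ℝ) :=
  stringCone n w ∩ lamCone n w lam

/-- `λ = λ_1 ϖ_1 + ⋯ + λ_n ϖ_n` is a dominant integral weight: all `λ_j ≥ 0`. -/
def Dominant (n : ℕ) (lam : ℕ → ℤ) : Prop := ∀ j, 1 ≤ j → j ≤ n → 0 ≤ lam j

/-- `λ` is a regular dominant integral weight: all `λ_j > 0`. -/
def RegularDominant (n : ℕ) (lam : ℕ → ℤ) : Prop := ∀ j, 1 ≤ j → j ≤ n → 0 < lam j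

/-! ### Unimodular equivalence, Gelfand–Cetlin polytope, facets -/

/-- `P` and `Q` are unimodularly equivalent: `Q = M(P) + v` with `M ∈ GL(m, ℤ)`, `v ∈ ℤ^m`. -/
def UnimodEquiv {m : ℕ} (P Q : Set (Fin m → ℝ)) : Prop :=
  ∃ (M : Matrix (Fin m) (Fin m) ℤ) (v : Fin m → ℤ), IsUnit M.det ∧
    Q = (fun x i => (∑ j, (M i j : ℝ) * x j) + (v i : ℝ)) '' P

/-- the entry `x_{k,j}` (`1 ≤ j ≤ k ≤ n+1`) of a Gelfand–Cetlin pattern, where the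
top row is `x_{n+1,j} = λ_j + ⋯ + λ_n` and `x_{n+1,n+1} = 0`; the pair `(k, j)` is
encoded as the coordinate `k(k-1)/2 + (j-1)` of `ℝ^N`. -/
def gcX (n : ℕ) (lam : ℕ → ℤ) (x : Fin (Dim n) → ℝ) (k j : ℕ) : ℝ :=
  if k = n + 1 then (if j ≤ n then ∑ t ∈ Finset.Icc j n, (lam t : ℝ) else 0)
  else if h : k * (k - 1) / 2 + (j - 1) < Dim n then x ⟨k * (k - 1) / 2 + (j - 1), h⟩ else 0

/-- the Gelfand–Cetlin polytope `GC(λ) ⊆ ℝ^N`. -/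
def GCPolytope (n : ℕ) (lam : ℕ → ℤ) : Set (Fin (Dim n) → ℝ) :=
  {x | ∀ k j, 1 ≤ k → k ≤ n → 1 ≤ j → j ≤ k →
      gcX n lam x k j ≤ gcX n lam x (k + 1) j ∧
      gcX n lam x (k + 1) (j + 1) ≤ gcX n lam x k j}

/-- a face of a convex set: a convex extreme subset. -/
def IsFaceSet {m : ℕ} (S F : Set (Fin m → ℝ)) : Prop := IsExtreme ℝ S F ∧ Convex ℝ F

/-- a facet: a maximal proper face. -/
def IsFacet {m : ℕ} (S F : Set (Fin m → ℝ)) : Prop :=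
  IsFaceSet S F ∧ F ≠ S ∧ ∀ G, IsFaceSet S G → G ≠ S → F ⊆ G → F = G

/-- the number of facets. -/
def numFacets {m : ℕ} (S : Set (Fin m → ℝ)) : ℕ := {F | IsFacet S F}.ncard

/-- combinatorial equivalence: an inclusion-preserving bijection between face lattices. -/
def CombEquiv {m : ℕ} (S T : Set (Fin m → ℝ)) : Prop :=
  ∃ e : {F // IsFaceSet S F} ≃ {F // IsFaceSet T F},
    ∀ F G : {F // IsFaceSet S F}, F.1 ⊆ G.1 ↔ (e F).1 ⊆ (e G).1

/-! ### Indices, contractions and extensions -/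

/-- the `D`-index `ind_D(i) = |i_D^+|` for a decomposition `i ∼ i_D^- D_n i_D^+`
(independent of the decomposition). -/
def indD (n : ℕ) (w : List ℕ) : ℕ :=
  sInf {s | ∃ u v : List ℕ, v.length = s ∧ TwoMoveEquiv w (u ++ descWord n ++ v)}

/-- the `A`-index `ind_A(i) = |i_A^+|` for a decomposition `i ∼ i_A^- A_n i_A^+`. -/
def indA (n : ℕ) (w : List ℕ) : ℕ :=
  sInf {s | ∃ u v : List ℕ, v.length = s ∧ TwoMoveEquiv w (u ++ ascWord n ++ v)}

/-- `w'` is a `D`-contraction `C_D(w) = i_D^- (i_D^+ - 1)` of `w ∈ Σ_{n+1}`. -/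
def IsContractionD (n : ℕ) (w w' : List ℕ) : Prop :=
  ∃ u v : List ℕ, TwoMoveEquiv w (u ++ descWord n ++ v) ∧ w' = u ++ v.map (· - 1)

/-- `w'` is an `A`-contraction `C_A(w) = (i_A^- - 1) i_A^+` of `w ∈ Σ_{n+1}`. -/
def IsContractionA (n : ℕ) (w w' : List ℕ) : Prop :=
  ∃ u v : List ℕ, TwoMoveEquiv w (u ++ ascWord n ++ v) ∧ w' = u.map (· - 1) ++ v

/-- the `D`-extension `E_D(s) : Σ_{n+1} → Σ_{n+2}`,
`i = i^-(s) i^+(s) ↦ i^-(s) D_{n+1} (i^+(s) + 1)` where `|i^+(s)| = s`. -/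
def extD (n : ℕ) (s : ℕ) (w : List ℕ) : List ℕ :=
  w.take (w.length - s) ++ descWord (n + 1) ++ (w.drop (w.length - s)).map (· + 1)

/-- the `A`-extension `E_A(s) : Σ_{n+1} → Σ_{n+2}`,
`i = i^-(s) i^+(s) ↦ (i^-(s) + 1) A_{n+1} i^+(s)`. -/
def extA (n : ℕ) (s : ℕ) (w : List ℕ) : List ℕ :=
  (w.take (w.length - s)).map (· + 1) ++ ascWord (n + 1) ++ w.drop (w.length - s)

/-- there exists `(σ_1, …, σ_n) ∈ {A, D}^n` (here `true = D`, `false = A`) such that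
`ind_{σ_k}(C_{σ_{k+1}} ∘ ⋯ ∘ C_{σ_n}(i)) = 0` for all `k = n, …, 1`. -/
def SimplicialWord (n : ℕ) (w : List ℕ) : Prop :=
  ∃ (σ : ℕ → Bool) (c : ℕ → List ℕ), c n = w ∧
    ∀ k, 1 ≤ k → k ≤ n →
      (if σ k then IsContractionD k (c k) (c (k - 1)) ∧ indD k (c k) = 0
       else IsContractionA k (c k) (c (k - 1)) ∧ indA k (c k) = 0)


/-- the `D`-coindex `coind_D(i) = |i_D^-|`. -/
def coindD (n : ℕ) (w : List ℕ) : ℕ :=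
  sInf {s | ∃ u v : List ℕ, u.length = s ∧ TwoMoveEquiv w (u ++ descWord n ++ v)}

/-- the `A`-coindex `coind_A(i) = |i_A^-|`. -/
def coindA (n : ℕ) (w : List ℕ) : ℕ :=
  sInf {s | ∃ u v : List ℕ, u.length = s ∧ TwoMoveEquiv w (u ++ ascWord n ++ v)}

/-- the `a`-th (0-based) coordinate of a point of `ℝ^N`. -/
def entry (n : ℕ) (t : Fin (Dim n) → ℝ) (a : ℕ) : ℝ :=
  if h : a < Dim n then t ⟨a, h⟩ else 0

/-- the product of cones
`t_1 ≥ 0`, `t_2 ≥ t_3 ≥ 0`, …, `t_{N-n+1} ≥ ⋯ ≥ t_N ≥ 0` (in `ℝ^N`, 1-based: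
for `k = 1, …, n` the chain `t_{k(k-1)/2+1} ≥ ⋯ ≥ t_{k(k-1)/2+k} ≥ 0`). -/
def chainCone (n : ℕ) : Set (Fin (Dim n) → ℝ) :=
  {t | ∀ k j, 1 ≤ k → k ≤ n → 1 ≤ j → j ≤ k →
    (if j = k then 0 else entry n t (k * (k - 1) / 2 + j)) ≤
      entry n t (k * (k - 1) / 2 + (j - 1))}

def nodeSwap (p : ℕ) : Equiv.Perm ℕ := Equiv.swap p (p + 1)

lemma nodeSwap_lt_nodeSwap_iff {p x y : ℕ} (h₁ : ¬(x = p ∧ y = p + 1))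
    (h₂ : ¬(x = p + 1 ∧ y = p)) : nodeSwap p x < nodeSwap p y ↔ x < y := by
  simp only [nodeSwap, Equiv.swap_apply_def]
  split_ifs <;> omega

@[simp]
lemma nodeSwap_nodeSwap (p j : ℕ) : nodeSwap p (nodeSwap p j) = j :=
  Equiv.swap_apply_self _ _ _

lemma mem_map_nodeSwap {p j : ℕ} {l : List ℕ} :
    j ∈ l.map (nodeSwap p) ↔ nodeSwap p j ∈ l := by
  rw [List.mem_map]
  constructor
  · rintro ⟨i, hi, rfl⟩
    rwa [nodeSwap_nodeSwap]
  · exact fun h => ⟨_, h, nodeSwap_nodeSwap p j⟩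

lemma map_nodeSwap_map_nodeSwap (p : ℕ) (l : List ℕ) :
    (l.map (nodeSwap p)).map (nodeSwap p) = l := by
  simp [Function.comp_def]

lemma one_le_nodeSwap_succ {p j : ℕ} (hj : 1 ≤ j) : 1 ≤ nodeSwap (p + 1) j := by
  simp only [nodeSwap, Equiv.swap_apply_def]
  split_ifs <;> omega

lemma wordProd_cons (a : ℕ) (l : List ℕ) : wordProd (a :: l) = sTrans a * wordProd l := by
  simp [wordProd]

lemma wordProd_append (l₁ l₂ : List ℕ) :
    wordProd (l₁ ++ l₂) = wordProd l₁ * wordProd l₂ := by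
  simp [wordProd]

lemma sTrans_apply_of_ne {a x : ℕ} (h₁ : x ≠ a) (h₂ : x ≠ a + 1) : sTrans a x = x :=
  Equiv.swap_apply_of_ne_of_ne h₁ h₂

lemma sTrans_mul_comm {a b : ℕ} (hab : a + 1 < b ∨ b + 1 < a) :
    sTrans a * sTrans b = sTrans b * sTrans a := by
  ext k
  simp only [sTrans, Equiv.Perm.mul_apply, Equiv.swap_apply_def]
  split_ifs <;> omega

lemma _root_.Function.Involutive.image_eq_of_mapsTo {α : Type*} {f : α → α}
    (hf : Function.Involutive f) {A B : Set α} (hAB : Set.MapsTo f A B) (hBA : Set.MapsTo f B A) :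
    f '' A = B := by
  rw [hf.image_eq_preimage_symm]
  exact Set.Subset.antisymm (fun x hx => hf x ▸ hAB hx) hBA

lemma UnimodEquiv.refl {m : ℕ} (P : Set (Fin m → ℝ)) : UnimodEquiv P P :=
  ⟨1, 0, by simp, by simp [Matrix.one_apply]⟩

lemma UnimodEquiv.trans {m : ℕ} {P Q R : Set (Fin m → ℝ)} (h₁ : UnimodEquiv P Q)
    (h₂ : UnimodEquiv Q R) : UnimodEquiv P R := by
  obtain ⟨M₁, v₁, hM₁, rfl⟩ := h₁
  obtain ⟨M₂, v₂, hM₂, rfl⟩ := h₂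
  refine ⟨M₂ * M₁, M₂.mulVec v₁ + v₂, Matrix.det_mul M₂ M₁ ▸ hM₂.mul hM₁, ?_⟩
  rw [Set.image_image]
  refine Set.image_congr fun x _ => funext fun i => ?_
  simp only [Matrix.mul_apply, Matrix.mulVec, dotProduct, Pi.add_apply, Int.cast_add,
    Int.cast_sum, Int.cast_mul, mul_add, Finset.mul_sum, Finset.sum_mul, Finset.sum_add_distrib]
  rw [Finset.sum_comm]
  simp only [mul_assoc]
  ring

lemma unimodEquiv_image_comp_perm {m : ℕ} (σ : Equiv.Perm (Fin m)) (P : Set (Fin m → ℝ)) :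
    UnimodEquiv P ((fun t j => t (σ j)) '' P) := by
  refine ⟨σ.permMatrix ℤ, 0, by simp, ?_⟩
  refine Set.image_congr fun x _ => funext fun i => ?_
  simp [Equiv.Perm.permMatrix, PEquiv.toMatrix_apply]

lemma TwoMoveStep.length_eq {w w' : List ℕ} (h : TwoMoveStep w w') : w'.length = w.length := by
  obtain ⟨u, v, a, b, -, rfl, rfl⟩ := h
  simp

lemma TwoMoveEquiv.length_eq {w w' : List ℕ} (h : TwoMoveEquiv w w') : w'.length = w.length := by
  induction h with
  | refl => rfl
  | tail _ hstep ih => exact hstep.length_eq.trans ih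

lemma mem_nodesOn {w : List ℕ} {r j : ℕ} :
    j ∈ nodesOn w r ↔ ValidNode w j ∧ NodeOnWire w j r := by
  simp only [nodesOn, List.mem_filter, List.mem_map, List.mem_range, decide_eq_true_eq, ValidNode]
  constructor
  · rintro ⟨⟨i, hi, rfl⟩, h⟩
    exact ⟨⟨by omega, by omega⟩, h⟩
  · rintro ⟨⟨h₁, h₂⟩, h⟩
    exact ⟨⟨j - 1, by omega, by omega⟩, h⟩

lemma one_le_of_mem_nodesOn {w : List ℕ} {r j : ℕ} (h : j ∈ nodesOn w r) : 1 ≤ j :=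
  (mem_nodesOn.mp h).1.1

lemma nodesOn_nodup (w : List ℕ) (r : ℕ) : (nodesOn w r).Nodup :=
  (List.nodup_range.map (add_left_injective 1)).filter _

lemma nodeOnWire_otherWire (w : List ℕ) (j r : ℕ) : NodeOnWire w j (otherWire w j r) := by
  unfold otherWire NodeOnWire
  split_ifs
  exacts [Or.inr rfl, Or.inl rfl]

lemma TravelOK.one_le {w : List ℕ} {k : ℕ} :
    ∀ {ms : List ℕ} {r c : ℕ}, TravelOK w k r c ms → ∀ x ∈ ms, 1 ≤ x
  | [], _, _, _ => by simp
  | m :: _, r, _, ⟨hv, _, _, _, htr⟩ => List.forall_mem_cons.mpr ⟨hv.1, htr.one_le⟩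

lemma IsGPPath.one_le {n k : ℕ} {w ms : List ℕ} (h : IsGPPath n w k ms) :
    ∀ x ∈ ms, 1 ≤ x := by
  obtain ⟨-, -, hstart, -⟩ := h
  cases ms with
  | nil => exact hstart.elim
  | cons m ms => exact List.forall_mem_cons.mpr ⟨hstart.1.1, hstart.2.2.2.one_le⟩

-- Coordinate `j` of `ℝ^N` carries the node `t_{j+1}`, so this is `nodeSwap (p + 1)` read on
-- coordinates.
def coordSwap {m : ℕ} (p : ℕ) (h : p + 1 < m) : Equiv.Perm (Fin m) :=
  Equiv.swap ⟨p, by omega⟩ ⟨p + 1, h⟩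

@[simp]
lemma coordSwap_coordSwap {m p : ℕ} (h : p + 1 < m) (j : Fin m) :
    coordSwap p h (coordSwap p h j) = j :=
  Equiv.swap_apply_self _ _ _

lemma coordSwap_val_add_one {m p : ℕ} (h : p + 1 < m) (j : Fin m) :
    (coordSwap p h j : ℕ) + 1 = nodeSwap (p + 1) (j + 1) := by
  rcases eq_or_ne j ⟨p, by omega⟩ with rfl | h₁
  · simp [coordSwap, nodeSwap]
  rcases eq_or_ne j ⟨p + 1, h⟩ with rfl | h₂
  · simp [coordSwap, nodeSwap]
  rw [coordSwap, nodeSwap, Equiv.swap_apply_of_ne_of_ne h₁ h₂,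
    Equiv.swap_apply_of_ne_of_ne (by simpa [Fin.ext_iff] using h₁)
      (by simpa [Fin.ext_iff] using h₂)]

section TwoMove

variable {u v : List ℕ} {a b : ℕ}

lemma letterAt_twoMove {j : ℕ} (hj : 1 ≤ j) :
    letterAt (u ++ b :: a :: v) j = letterAt (u ++ a :: b :: v) (nodeSwap (u.length + 1) j) := by
  rcases Nat.lt_or_ge (u.length + 2) j with h | h
  · obtain ⟨k, rfl⟩ := Nat.exists_eq_add_of_lt h
    rw [nodeSwap, Equiv.swap_apply_of_ne_of_ne (by omega) (by omega)]
    simp only [letterAt, Nat.add_sub_cancel,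
      List.getD_append_right _ _ _ _ (by omega : u.length ≤ u.length + 2 + k),
      show u.length + 2 + k - u.length = k + 2 by omega, List.getD_cons_succ]
  obtain h | rfl | rfl : j ≤ u.length ∨ j = u.length + 1 ∨ j = u.length + 2 := by omega
  · rw [nodeSwap, Equiv.swap_apply_of_ne_of_ne (by omega) (by omega)]
    simp only [letterAt, List.getD_append _ _ _ _ (by omega : j - 1 < u.length)]
  · simp [letterAt, nodeSwap]
  · simp [letterAt, nodeSwap]

lemma wordProd_take_twoMove (hab : a + 1 < b ∨ b + 1 < a) {m : ℕ} (hm : m ≠ u.length + 1) :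
    wordProd ((u ++ b :: a :: v).take m) = wordProd ((u ++ a :: b :: v).take m) := by
  rcases le_or_gt m u.length with h | h
  · rw [List.take_append_of_le_length h, List.take_append_of_le_length h]
  · obtain ⟨k, hk⟩ : ∃ k, m - u.length = k + 2 := ⟨m - u.length - 2, by omega⟩
    simp only [List.take_append, hk, List.take_succ_cons, wordProd_append, wordProd_cons,
      ← mul_assoc, sTrans_mul_comm hab]

lemma stateAbove_twoMove_left : stateAbove (u ++ a :: b :: v) (u.length + 1) = wordProd u := by
  simp [stateAbove]

lemma stateAbove_twoMove_right :
    stateAbove (u ++ a :: b :: v) (u.length + 2) = wordProd u * sTrans a := by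
  simp [stateAbove, List.take_append, wordProd, List.take_of_length_le]

lemma letterAt_twoMove_left : letterAt (u ++ a :: b :: v) (u.length + 1) = a := by
  simp [letterAt]

lemma letterAt_twoMove_right : letterAt (u ++ a :: b :: v) (u.length + 2) = b := by
  simp [letterAt]

lemma stateAbove_twoMove_apply (hab : a + 1 < b ∨ b + 1 < a) {j c : ℕ} (hj : 1 ≤ j)
    (hc : c = letterAt (u ++ b :: a :: v) j ∨ c = letterAt (u ++ b :: a :: v) j + 1) :
    stateAbove (u ++ b :: a :: v) j c =
      stateAbove (u ++ a :: b :: v) (nodeSwap (u.length + 1) j) c := by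
  rcases eq_or_ne j (u.length + 1) with rfl | h₁
  · rw [letterAt_twoMove_left] at hc
    simp only [nodeSwap, Equiv.swap_apply_left, stateAbove_twoMove_left,
      stateAbove_twoMove_right, Equiv.Perm.mul_apply, sTrans_apply_of_ne (by omega : c ≠ a)
        (by omega : c ≠ a + 1)]
  rcases eq_or_ne j (u.length + 2) with rfl | h₂
  · rw [letterAt_twoMove_right] at hc
    simp only [nodeSwap, Equiv.swap_apply_right, stateAbove_twoMove_left,
      stateAbove_twoMove_right, Equiv.Perm.mul_apply, sTrans_apply_of_ne (by omega : c ≠ b)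
        (by omega : c ≠ b + 1)]
  · rw [nodeSwap, Equiv.swap_apply_of_ne_of_ne h₁ h₂, stateAbove, stateAbove,
      wordProd_take_twoMove hab (by omega)]

lemma wireX_twoMove (hab : a + 1 < b ∨ b + 1 < a) {j : ℕ} (hj : 1 ≤ j) :
    wireX (u ++ b :: a :: v) j = wireX (u ++ a :: b :: v) (nodeSwap (u.length + 1) j) := by
  rw [wireX, wireX, stateAbove_twoMove_apply hab hj (Or.inl rfl), letterAt_twoMove hj]

lemma wireY_twoMove (hab : a + 1 < b ∨ b + 1 < a) {j : ℕ} (hj : 1 ≤ j) :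
    wireY (u ++ b :: a :: v) j = wireY (u ++ a :: b :: v) (nodeSwap (u.length + 1) j) := by
  rw [wireY, wireY, stateAbove_twoMove_apply hab hj (Or.inr rfl), letterAt_twoMove hj]

lemma nodeOnWire_twoMove (hab : a + 1 < b ∨ b + 1 < a) {j : ℕ} (hj : 1 ≤ j) (r : ℕ) :
    NodeOnWire (u ++ b :: a :: v) j r ↔
      NodeOnWire (u ++ a :: b :: v) (nodeSwap (u.length + 1) j) r := by
  rw [NodeOnWire, NodeOnWire, wireX_twoMove hab hj, wireY_twoMove hab hj]

lemma otherWire_twoMove (hab : a + 1 < b ∨ b + 1 < a) {j : ℕ} (hj : 1 ≤ j) (r : ℕ) :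
    otherWire (u ++ b :: a :: v) j r =
      otherWire (u ++ a :: b :: v) (nodeSwap (u.length + 1) j) r := by
  rw [otherWire, otherWire, wireX_twoMove hab hj, wireY_twoMove hab hj]

lemma forbidden_twoMove (hab : a + 1 < b ∨ b + 1 < a) {j : ℕ} (hj : 1 ≤ j) (k r : ℕ) :
    Forbidden (u ++ b :: a :: v) k j r ↔
      Forbidden (u ++ a :: b :: v) k (nodeSwap (u.length + 1) j) r := by
  rw [Forbidden, Forbidden, otherWire_twoMove hab hj]

lemma validNode_twoMove (j : ℕ) :
    ValidNode (u ++ b :: a :: v) j ↔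
      ValidNode (u ++ a :: b :: v) (nodeSwap (u.length + 1) j) := by
  simp only [ValidNode, List.length_append, List.length_cons, nodeSwap, Equiv.swap_apply_def]
  split_ifs <;> omega

lemma not_nodeOnWire_twoMove_left_and_right (hab : a + 1 < b ∨ b + 1 < a) (r : ℕ) :
    ¬(NodeOnWire (u ++ a :: b :: v) (u.length + 1) r ∧
      NodeOnWire (u ++ a :: b :: v) (u.length + 2) r) := by
  rintro ⟨h₁, h₂⟩
  simp only [NodeOnWire, wireX, wireY, stateAbove_twoMove_left, stateAbove_twoMove_right,
    letterAt_twoMove_left, letterAt_twoMove_right, Equiv.Perm.mul_apply,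
    sTrans_apply_of_ne (by omega : b ≠ a) (by omega : b ≠ a + 1),
    sTrans_apply_of_ne (by omega : b + 1 ≠ a) (by omega : b + 1 ≠ a + 1)] at h₁ h₂
  rcases h₁ with h₁ | h₁ <;> rcases h₂ with h₂ | h₂ <;>
    have := (wordProd u).injective (h₁.trans h₂.symm) <;> omega

lemma nodeSwap_lt_nodeSwap_iff_of_nodeOnWire (hab : a + 1 < b ∨ b + 1 < a) {r x y : ℕ}
    (hx : NodeOnWire (u ++ a :: b :: v) x r) (hy : NodeOnWire (u ++ a :: b :: v) y r) :
    nodeSwap (u.length + 1) x < nodeSwap (u.length + 1) y ↔ x < y := by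
  refine nodeSwap_lt_nodeSwap_iff ?_ ?_ <;> rintro ⟨rfl, rfl⟩
  exacts [not_nodeOnWire_twoMove_left_and_right hab r ⟨hx, hy⟩,
    not_nodeOnWire_twoMove_left_and_right hab r ⟨hy, hx⟩]

lemma nodesOn_twoMove_perm (hab : a + 1 < b ∨ b + 1 < a) (r : ℕ) :
    (nodesOn (u ++ b :: a :: v) r).Perm
      ((nodesOn (u ++ a :: b :: v) r).map (nodeSwap (u.length + 1))) := by
  refine (List.perm_ext_iff_of_nodup (nodesOn_nodup _ _)
    ((nodesOn_nodup _ _).map (Equiv.injective _))).mpr fun j => ?_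
  rw [mem_map_nodeSwap, mem_nodesOn, mem_nodesOn, ← validNode_twoMove]
  exact and_congr_right fun hv => nodeOnWire_twoMove hab hv.1 r

lemma filter_nodesOn_twoMove_perm (hab : a + 1 < b ∨ b + 1 < a) {r : ℕ} {P Q : ℕ → Bool}
    (hPQ : ∀ j ∈ nodesOn (u ++ a :: b :: v) r, P (nodeSwap (u.length + 1) j) = Q j) :
    ((nodesOn (u ++ b :: a :: v) r).filter P).Perm
      (((nodesOn (u ++ a :: b :: v) r).filter Q).map (nodeSwap (u.length + 1))) := by
  refine ((nodesOn_twoMove_perm hab r).filter P).trans ?_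
  rw [List.filter_map, List.filter_congr (p := P ∘ _) hPQ]

lemma tailList_twoMove_perm (hab : a + 1 < b ∨ b + 1 < a) {r c : ℕ}
    (hc : NodeOnWire (u ++ a :: b :: v) c r) :
    (tailList (u ++ b :: a :: v) r (nodeSwap (u.length + 1) c)).Perm
      ((tailList (u ++ a :: b :: v) r c).map (nodeSwap (u.length + 1))) :=
  filter_nodesOn_twoMove_perm hab fun j hj => by
    simp [nodeSwap_lt_nodeSwap_iff_of_nodeOnWire hab hc (mem_nodesOn.mp hj).2]

lemma segList_twoMove_perm (hab : a + 1 < b ∨ b + 1 < a) {r c d : ℕ}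
    (hc : NodeOnWire (u ++ a :: b :: v) c r) (hd : NodeOnWire (u ++ a :: b :: v) d r) :
    (segList (u ++ b :: a :: v) r (nodeSwap (u.length + 1) c) (nodeSwap (u.length + 1) d)).Perm
      ((segList (u ++ a :: b :: v) r c d).map (nodeSwap (u.length + 1))) :=
  filter_nodesOn_twoMove_perm hab fun j hj => by
    have hj := (mem_nodesOn.mp hj).2
    simp [nodeSwap_lt_nodeSwap_iff_of_nodeOnWire hab hc hj,
      nodeSwap_lt_nodeSwap_iff_of_nodeOnWire hab hd hj,
      nodeSwap_lt_nodeSwap_iff_of_nodeOnWire hab hj hc,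
      nodeSwap_lt_nodeSwap_iff_of_nodeOnWire hab hj hd]

lemma forall_not_forbidden_twoMove (hab : a + 1 < b ∨ b + 1 < a) {L L' : List ℕ} {k r s : ℕ}
    (hL : L'.Perm (L.map (nodeSwap (u.length + 1))))
    (hsub : ∀ j ∈ L, j ∈ nodesOn (u ++ a :: b :: v) s) :
    (∀ j ∈ L', ¬ Forbidden (u ++ b :: a :: v) k j r) ↔
      ∀ j ∈ L, ¬ Forbidden (u ++ a :: b :: v) k j r := by
  simp only [hL.mem_iff, List.forall_mem_map]
  refine forall₂_congr fun j hj => ?_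
  rw [forbidden_twoMove hab (one_le_nodeSwap_succ (one_le_of_mem_nodesOn (hsub j hj))),
    nodeSwap_nodeSwap]

lemma TravelOK.twoMove (hab : a + 1 < b ∨ b + 1 < a) {k : ℕ} :
    ∀ {ms : List ℕ} {r c : ℕ}, NodeOnWire (u ++ a :: b :: v) c r →
      TravelOK (u ++ a :: b :: v) k r c ms →
      TravelOK (u ++ b :: a :: v) k r (nodeSwap (u.length + 1) c)
        (ms.map (nodeSwap (u.length + 1)))
  | [], r, c, hc, ⟨hr, htail⟩ =>
    ⟨hr, (forall_not_forbidden_twoMove hab (tailList_twoMove_perm hab hc)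
      fun _ => List.mem_of_mem_filter).mpr htail⟩
  | m :: ms, r, c, hc, ⟨hv, hm, hord, hseg, htr⟩ => by
    have hm₁ : 1 ≤ nodeSwap (u.length + 1) m := one_le_nodeSwap_succ hv.1
    refine ⟨by rwa [validNode_twoMove, nodeSwap_nodeSwap],
      by rwa [nodeOnWire_twoMove hab hm₁, nodeSwap_nodeSwap], ?_,
      (forall_not_forbidden_twoMove hab (segList_twoMove_perm hab hc hm)
        fun _ => List.mem_of_mem_filter).mpr hseg, ?_⟩
    · rwa [nodeSwap_lt_nodeSwap_iff_of_nodeOnWire hab hm hc,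
        nodeSwap_lt_nodeSwap_iff_of_nodeOnWire hab hc hm]
    · rw [otherWire_twoMove hab hm₁, nodeSwap_nodeSwap]
      exact TravelOK.twoMove hab (nodeOnWire_otherWire _ _ _) htr

lemma visitTail_twoMove_perm (hab : a + 1 < b ∨ b + 1 < a) {k : ℕ} :
    ∀ {ms : List ℕ} {r c : ℕ}, NodeOnWire (u ++ a :: b :: v) c r →
      TravelOK (u ++ a :: b :: v) k r c ms →
      (visitTail (u ++ b :: a :: v) r (nodeSwap (u.length + 1) c)
        (ms.map (nodeSwap (u.length + 1)))).Perm
        ((visitTail (u ++ a :: b :: v) r c ms).map (nodeSwap (u.length + 1)))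
  | [], _, _, hc, _ => tailList_twoMove_perm hab hc
  | m :: _, r, _, hc, ⟨hv, hm, _, _, htr⟩ => by
    simp only [visitTail, List.map_cons, List.map_append]
    rw [otherWire_twoMove hab (one_le_nodeSwap_succ hv.1), nodeSwap_nodeSwap]
    exact (segList_twoMove_perm hab hc hm).append
      ((visitTail_twoMove_perm hab (nodeOnWire_otherWire _ m r) htr).cons _)

lemma IsGPPath.twoMove (hab : a + 1 < b ∨ b + 1 < a) {n k : ℕ} {ms : List ℕ}
    (h : IsGPPath n (u ++ a :: b :: v) k ms) :
    IsGPPath n (u ++ b :: a :: v) k (ms.map (nodeSwap (u.length + 1))) := by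
  obtain ⟨hk₁, hkn, hstart, hnodup⟩ := h
  cases ms with
  | nil => exact hstart.elim
  | cons m ms =>
    obtain ⟨hv, hm, htail, htr⟩ := hstart
    have hm₁ : 1 ≤ nodeSwap (u.length + 1) m := one_le_nodeSwap_succ hv.1
    have hother : otherWire (u ++ b :: a :: v) (nodeSwap (u.length + 1) m) k =
        otherWire (u ++ a :: b :: v) m k := by
      rw [otherWire_twoMove hab hm₁, nodeSwap_nodeSwap]
    have hvisit :
        (visitList (u ++ b :: a :: v) k ((m :: ms).map (nodeSwap (u.length + 1)))).Perm
        ((visitList (u ++ a :: b :: v) k (m :: ms)).map (nodeSwap (u.length + 1))) := by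
      simp only [visitList, List.map_cons, List.map_append, hother]
      exact (tailList_twoMove_perm hab hm).append
        ((visitTail_twoMove_perm hab (nodeOnWire_otherWire _ m k) htr).cons _)
    refine ⟨hk₁, hkn, ⟨by rwa [validNode_twoMove, nodeSwap_nodeSwap],
      by rwa [nodeOnWire_twoMove hab hm₁, nodeSwap_nodeSwap],
      (forall_not_forbidden_twoMove hab (tailList_twoMove_perm hab hm)
        fun _ => List.mem_of_mem_filter).mpr htail,
      by rw [hother]; exact htr.twoMove hab (nodeOnWire_otherWire _ m k)⟩,
      hvisit.nodup_iff.mpr (hnodup.map (Equiv.injective _))⟩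

lemma pathSwitches_twoMove (hab : a + 1 < b ∨ b + 1 < a) :
    ∀ {ms : List ℕ} {r : ℕ}, (∀ x ∈ ms, 1 ≤ x) →
      pathSwitches (u ++ b :: a :: v) r (ms.map (nodeSwap (u.length + 1))) =
        (pathSwitches (u ++ a :: b :: v) r ms).map fun e => (nodeSwap (u.length + 1) e.1, e.2)
  | [], _, _ => rfl
  | m :: _, r, hpos => by
    rw [List.forall_mem_cons] at hpos
    simp only [List.map_cons, pathSwitches,
      otherWire_twoMove hab (one_le_nodeSwap_succ hpos.1), nodeSwap_nodeSwap,
      pathSwitches_twoMove hab hpos.2]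

lemma coeff_twoMove (hab : a + 1 < b ∨ b + 1 < a) {k : ℕ} {ms : List ℕ}
    (hpos : ∀ x ∈ ms, 1 ≤ x) (j : ℕ) :
    coeff (u ++ b :: a :: v) k (ms.map (nodeSwap (u.length + 1))) j =
      coeff (u ++ a :: b :: v) k ms (nodeSwap (u.length + 1) j) := by
  simp only [coeff, pathSwitches_twoMove hab hpos, List.map_map, Function.comp_def,
    (nodeSwap (u.length + 1)).injective.eq_iff' (nodeSwap_nodeSwap _ j)]

lemma stringIneq_twoMove (hab : a + 1 < b ∨ b + 1 < a) {n : ℕ}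
    {σ : Equiv.Perm (Fin (Dim n))}
    (hσ : ∀ j, (σ j : ℕ) + 1 = nodeSwap (u.length + 1) (j + 1))
    {k : ℕ} {ms : List ℕ} (hpos : ∀ x ∈ ms, 1 ≤ x) (t : Fin (Dim n) → ℝ) :
    stringIneq n (u ++ b :: a :: v) (k, ms.map (nodeSwap (u.length + 1))) (fun j => t (σ j)) =
      stringIneq n (u ++ a :: b :: v) (k, ms) t := by
  rw [stringIneq, stringIneq,
    ← Equiv.sum_comp σ fun j => normalVec n (u ++ a :: b :: v) (k, ms) j * t j]
  refine Finset.sum_congr rfl fun j _ => ?_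
  rw [normalVec, normalVec, coeff_twoMove hab hpos, hσ]

lemma lamCoeff_twoMove {x y : ℕ} (hx : 1 ≤ x) (hy : 1 ≤ y) :
    lamCoeff (u ++ b :: a :: v) x y =
      lamCoeff (u ++ a :: b :: v) (nodeSwap (u.length + 1) x) (nodeSwap (u.length + 1) y) := by
  rw [lamCoeff, lamCoeff, letterAt_twoMove hx, letterAt_twoMove hy]

lemma lamCoeff_twoMove_eq_zero (hab : a + 1 < b ∨ b + 1 < a) {x y : ℕ}
    (h : x = u.length + 1 ∧ y = u.length + 2 ∨ x = u.length + 2 ∧ y = u.length + 1) :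
    lamCoeff (u ++ a :: b :: v) x y = 0 := by
  rcases h with ⟨rfl, rfl⟩ | ⟨rfl, rfl⟩ <;>
    simp only [lamCoeff, letterAt_twoMove_left, letterAt_twoMove_right] <;>
    rw [if_neg (by omega), if_neg (by omega)]

lemma lamIneq_twoMove (hab : a + 1 < b ∨ b + 1 < a) {n : ℕ}
    {σ : Equiv.Perm (Fin (Dim n))}
    (hσ : ∀ j, (σ j : ℕ) + 1 = nodeSwap (u.length + 1) (j + 1))
    (lam : ℕ → ℤ) (j : Fin (Dim n)) (t : Fin (Dim n) → ℝ) :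
    LamIneq n (u ++ b :: a :: v) lam j (fun i => t (σ i)) ↔
      LamIneq n (u ++ a :: b :: v) lam (σ j) t := by
  rw [LamIneq, LamIneq, letterAt_twoMove (by omega), ← hσ, ← Equiv.sum_comp σ fun k =>
    (if (σ j : ℕ) < k then lamCoeff (u ++ a :: b :: v) (σ j + 1) (k + 1) else 0) * t k]
  congr! 3 with k
  rw [lamCoeff_twoMove (by omega) (by omega), ← hσ, ← hσ]
  by_cases hjk : (σ j : ℕ) = u.length ∧ (σ k : ℕ) = u.length + 1 ∨
      (σ j : ℕ) = u.length + 1 ∧ (σ k : ℕ) = u.length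
  · rw [lamCoeff_twoMove_eq_zero hab (by omega), ite_self, ite_self]
  · have hlt := nodeSwap_lt_nodeSwap_iff (p := u.length + 1) (x := σ j + 1) (y := σ k + 1)
      (by omega) (by omega)
    have hσσ : ∀ i, nodeSwap (u.length + 1) ((σ i : ℕ) + 1) = i + 1 := fun i => by
      rw [hσ, nodeSwap_nodeSwap]
    rw [hσσ, hσσ, Nat.add_lt_add_iff_right, Nat.add_lt_add_iff_right] at hlt
    simp only [hlt]

lemma mapsTo_stringCone_twoMove (hab : a + 1 < b ∨ b + 1 < a) {n : ℕ}
    {σ : Equiv.Perm (Fin (Dim n))}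
    (hσ : ∀ j, (σ j : ℕ) + 1 = nodeSwap (u.length + 1) (j + 1)) :
    Set.MapsTo (fun t j => t (σ j)) (stringCone n (u ++ a :: b :: v))
      (stringCone n (u ++ b :: a :: v)) := by
  rintro t ht ⟨k, ms⟩ hp
  have hp' : IsGPPath n (u ++ a :: b :: v) k (ms.map (nodeSwap (u.length + 1))) :=
    IsGPPath.twoMove hab.symm hp
  have h := stringIneq_twoMove (v := v) (k := k) hab hσ hp'.one_le t
  rw [map_nodeSwap_map_nodeSwap] at h
  exact h ▸ ht _ hp'

lemma mapsTo_lamCone_twoMove (hab : a + 1 < b ∨ b + 1 < a) {n : ℕ}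
    {σ : Equiv.Perm (Fin (Dim n))}
    (hσ : ∀ j, (σ j : ℕ) + 1 = nodeSwap (u.length + 1) (j + 1))
    (lam : ℕ → ℤ) :
    Set.MapsTo (fun t j => t (σ j)) (lamCone n (u ++ a :: b :: v) lam)
      (lamCone n (u ++ b :: a :: v) lam) :=
  fun t ht j => (lamIneq_twoMove hab hσ lam j t).mpr (ht _)

lemma unimodEquiv_twoMove (hab : a + 1 < b ∨ b + 1 < a) {n : ℕ} (hL : u.length + 1 < Dim n) :
    UnimodEquiv (stringCone n (u ++ a :: b :: v)) (stringCone n (u ++ b :: a :: v)) ∧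
      ∀ lam : ℕ → ℤ, UnimodEquiv (stringPolytope n (u ++ a :: b :: v) lam)
        (stringPolytope n (u ++ b :: a :: v) lam) := by
  have hσ := coordSwap_val_add_one hL
  have hinv : Function.Involutive fun (t : Fin (Dim n) → ℝ) j => t (coordSwap u.length hL j) :=
    fun t => funext fun j => congrArg t (coordSwap_coordSwap hL j)
  refine ⟨?_, fun lam => ?_⟩
  · rw [← hinv.image_eq_of_mapsTo (mapsTo_stringCone_twoMove hab hσ)
      (mapsTo_stringCone_twoMove hab.symm hσ)]
    exact unimodEquiv_image_comp_perm _ _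
  · rw [stringPolytope, stringPolytope, ← hinv.image_eq_of_mapsTo
      ((mapsTo_stringCone_twoMove hab hσ).inter_inter (mapsTo_lamCone_twoMove hab hσ lam))
      ((mapsTo_stringCone_twoMove hab.symm hσ).inter_inter
        (mapsTo_lamCone_twoMove hab.symm hσ lam))]
    exact unimodEquiv_image_comp_perm _ _

end TwoMove

lemma unimodEquiv_of_twoMoveStep {n : ℕ} {w w' : List ℕ} (h : TwoMoveStep w w')
    (hw : w.length = Dim n) :
    UnimodEquiv (stringCone n w) (stringCone n w') ∧
      ∀ lam : ℕ → ℤ, UnimodEquiv (stringPolytope n w lam) (stringPolytope n w' lam) := by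
  obtain ⟨u, v, a, b, hab, rfl, rfl⟩ := h
  refine unimodEquiv_twoMove hab ?_
  simp only [List.length_append, List.length_cons] at hw
  omega

theorem statement2_general (n : ℕ) (i i' : List ℕ) (hi : IsReduced n i) (h : TwoMoveEquiv i i') :
    UnimodEquiv (stringCone n i) (stringCone n i') ∧
    ∀ lam : ℕ → ℤ, Dominant n lam →
      UnimodEquiv (stringPolytope n i lam) (stringPolytope n i' lam) := by
  suffices UnimodEquiv (stringCone n i) (stringCone n i') ∧
      ∀ lam : ℕ → ℤ, UnimodEquiv (stringPolytope n i lam) (stringPolytope n i' lam) from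
    ⟨this.1, fun lam _ => this.2 lam⟩
  induction h with
  | refl => exact ⟨.refl _, fun _ => .refl _⟩
  | @tail w w' hw hstep ih =>
    have hstep' := unimodEquiv_of_twoMoveStep hstep ((TwoMoveEquiv.length_eq hw).trans hi.1)
    exact ⟨ih.1.trans hstep'.1, fun lam => (ih.2 lam).trans (hstep'.2 lam)⟩

/-- 2-moves give unimodular equivalences.
If `i, i' ∈ Σ_{n+1}` are 2-move equivalent then the string cones `C_i` and `C_{i'}`
are unimodularly equivalent, and for every dominant integral weight `λ` the string
polytopes `Δ_i(λ)` and `Δ_{i'}(λ)` are unimodularly equivalent. -/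
theorem statement2 (n : ℕ) (hn : 1 ≤ n) (i i' : List ℕ) (hi : IsReduced n i)
    (hi' : IsReduced n i') (h : TwoMoveEquiv i i') :
    UnimodEquiv (stringCone n i) (stringCone n i') ∧
    ∀ lam : ℕ → ℤ, Dominant n lam →
      UnimodEquiv (stringPolytope n i lam) (stringPolytope n i' lam) :=
  statement2_general n i i' hi h

end StringPolytope
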